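/- Every root system Φ in a Euclidean space (U, (·,·)) is a system of roots: in particular, for β, α ∈ Φ, if (q, p) is the integer pair of the extremal root chain through β in the direction α (i.e., q, p maximal nonnegative integers such that β + jα ∈ Φ ∪ {0} for all integers −q ≤ j ≤ p), then 2(β, α)/(α, α) = q − p. -/

import Mathlib

open RealInnerProductSpace

/-- `IsChainPair S β α q p` says that the extremal root chain through `β` in the
direction `α` inside `S` has integer pair `(q, p)`. -/
def IsChainPair {V : Type*} [AddCommGroup V] [Module ℝ V]
    (S : Set V) (β α : V) (q p : ℕ) : Prop :=
  (∀ j : ℤ, -(q : ℤ) ≤ j → j ≤ (p : ℤ) → β + j • α ∈ S) ∧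
  β + (-(q : ℤ) - 1) • α ∉ S ∧ β + ((p : ℤ) + 1) • α ∉ S

/-- A root system in a Euclidean vector space. -/
structure IsRootSystem {U : Type*} [NormedAddCommGroup U] [InnerProductSpace ℝ U]
    (Φ : Set U) : Prop where
  finite : Φ.Finite
  nonzero : ∀ v ∈ Φ, v ≠ 0
  spans : Submodule.span ℝ Φ = ⊤
  smul_mem_iff : ∀ α ∈ Φ, ∀ t : ℝ, (t • α ∈ Φ ↔ |t| = 1)
  reflect_mem : ∀ α ∈ Φ, ∀ β ∈ Φ, β - (2 * ⟪β, α⟫ / ⟪α, α⟫) • α ∈ Φ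
  integral : ∀ α ∈ Φ, ∀ β ∈ Φ, ∃ n : ℤ, 2 * ⟪β, α⟫ / ⟪α, α⟫ = (n : ℝ)

/-! Two roots `γ, δ` with `(γ, δ) < 0` add up to a root or to zero: unless `δ = -γ`, strict
Cauchy–Schwarz makes the product of the two negative integers `2(γ,δ)/(δ,δ)` and `2(δ,γ)/(γ,γ)`
smaller than `4`, so one of them is `-1` and a reflection sends `γ` or `δ` to `γ + δ`.
Hence if `β + jα` is a root (or zero) and `β + (j+1)α` is not, then `(β + jα, α) ≥ 0`; since
`(β + jα, α)` increases strictly with `j`, the `α`-string through `β` cannot resume after a gap,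
so it is exactly `{β + jα | -q ≤ j ≤ p}`. The reflection `σ_α` maps `β + jα` to `β + (-n-j)α`
with `n = 2(β,α)/(α,α)`, so it reverses this interval, which forces `n = q - p`. -/

theorem IsChainPair.neg {V : Type*} [AddCommGroup V] [Module ℝ V] {S : Set V} {β α : V}
    {q p : ℕ} (hc : IsChainPair S β α q p) : IsChainPair S β (-α) p q := by
  obtain ⟨hmem, hlow, hhigh⟩ := hc
  refine ⟨fun j h₁ h₂ => ?_, ?_, ?_⟩ <;> rw [smul_neg, ← neg_smul]
  · exact hmem (-j) (by omega) (by omega)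
  · rwa [show -(-(p : ℤ) - 1) = p + 1 by ring]
  · rwa [show -((q : ℤ) + 1) = -q - 1 by ring]

theorem real_inner_add_zsmul_left {U : Type*} [NormedAddCommGroup U] [InnerProductSpace ℝ U]
    (β α : U) (j : ℤ) : ⟪β + j • α, α⟫ = ⟪β, α⟫ + j * ⟪α, α⟫ := by
  rw [inner_add_left, inner_smul_left_eq_smul, zsmul_eq_mul]

namespace IsRootSystem

variable {U : Type*} [NormedAddCommGroup U] [InnerProductSpace ℝ U] {Φ : Set U}

theorem neg_mem (h : IsRootSystem Φ) {α : U} (hα : α ∈ Φ) : -α ∈ Φ := by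
  simpa using (h.smul_mem_iff α hα (-1)).2 (by norm_num)

theorem inner_sq_lt (h : IsRootSystem Φ) {γ δ : U} (hγ : γ ∈ Φ) (hδ : δ ∈ Φ)
    (hne : δ ≠ γ) (hne' : δ ≠ -γ) : ⟪γ, δ⟫ ^ 2 < ⟪γ, γ⟫ * ⟪δ, δ⟫ := by
  rw [real_inner_self_eq_norm_sq, real_inner_self_eq_norm_sq, ← mul_pow,
    sq_lt_sq, abs_of_nonneg (by positivity : (0 : ℝ) ≤ ‖γ‖ * ‖δ‖)]
  refine (abs_real_inner_le_norm γ δ).lt_of_ne fun heq => ?_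
  obtain ⟨r, -, rfl⟩ := (norm_inner_eq_norm_iff (𝕜 := ℝ) (h.nonzero γ hγ) (h.nonzero δ hδ)).1 heq
  rcases (abs_eq zero_le_one).1 ((h.smul_mem_iff γ hγ r).1 hδ) with rfl | rfl
  · exact hne (one_smul ℝ γ)
  · exact hne' (neg_one_smul ℝ γ)

theorem add_mem_of_inner_neg (h : IsRootSystem Φ) {γ δ : U} (hγ : γ ∈ Φ) (hδ : δ ∈ Φ)
    (hneg : ⟪γ, δ⟫ < 0) : γ + δ ∈ Φ ∪ {0} := by
  rcases eq_or_ne δ (-γ) with rfl | hne'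
  · simp
  have hγγ : 0 < ⟪γ, γ⟫ := real_inner_self_pos.2 (h.nonzero γ hγ)
  have hδδ : 0 < ⟪δ, δ⟫ := real_inner_self_pos.2 (h.nonzero δ hδ)
  have hne : δ ≠ γ := by
    rintro rfl
    exact hneg.not_gt hγγ
  obtain ⟨a, ha⟩ := h.integral δ hδ γ hγ
  obtain ⟨b, hb⟩ := h.integral γ hγ δ hδ
  have ha_neg : a < 0 := by
    have : (a : ℝ) < 0 := ha ▸ div_neg_of_neg_of_pos (by linarith) hδδ
    exact_mod_cast this
  have hb_neg : b < 0 := by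
    have : (b : ℝ) < 0 := hb ▸ div_neg_of_neg_of_pos (by linarith [real_inner_comm γ δ]) hγγ
    exact_mod_cast this
  have hab : a * b < 4 := by
    have : (a * b : ℝ) < 4 := by
      rw [← ha, ← hb, real_inner_comm γ δ, div_mul_div_comm, div_lt_iff₀ (by positivity)]
      nlinarith [h.inner_sq_lt hγ hδ hne hne']
    exact_mod_cast this
  have hneg_one : a = -1 ∨ b = -1 := by
    by_contra! hab'
    nlinarith [show a ≤ -2 by omega, show b ≤ -2 by omega]
  left
  rcases hneg_one with rfl | rfl
  · have hσ := h.reflect_mem δ hδ γ hγ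
    rw [ha] at hσ
    simpa using hσ
  · have hσ := h.reflect_mem γ hγ δ hδ
    rw [hb] at hσ
    simpa [add_comm] using hσ

theorem inner_nonneg_of_add_notMem (h : IsRootSystem Φ) {γ δ : U} (hγ : γ ∈ Φ ∪ {0})
    (hδ : δ ∈ Φ) (hnot : γ + δ ∉ Φ ∪ {0}) : 0 ≤ ⟪γ, δ⟫ := by
  rcases hγ with hγ | rfl
  · exact not_lt.1 fun hneg => hnot (h.add_mem_of_inner_neg hγ hδ hneg)
  · simp

theorem reflect_mem_union_zero (h : IsRootSystem Φ) {α γ : U} (hα : α ∈ Φ)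
    (hγ : γ ∈ Φ ∪ {0}) : γ - (2 * ⟪γ, α⟫ / ⟪α, α⟫) • α ∈ Φ ∪ {0} := by
  rcases hγ with hγ | rfl
  · exact Or.inl (h.reflect_mem α hα γ hγ)
  · simp

theorem integral_of_mem_union_zero (h : IsRootSystem Φ) {α γ : U} (hα : α ∈ Φ)
    (hγ : γ ∈ Φ ∪ {0}) : ∃ n : ℤ, 2 * ⟪γ, α⟫ / ⟪α, α⟫ = n := by
  rcases hγ with hγ | rfl
  · exact h.integral α hα γ hγ
  · exact ⟨0, by simp⟩

theorem le_of_isChainPair (h : IsRootSystem Φ) {β α : U} {q p : ℕ} (hα : α ∈ Φ)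
    (hc : IsChainPair (Φ ∪ {0}) β α q p) {j : ℤ} (hj : β + j • α ∈ Φ ∪ {0}) : j ≤ p := by
  obtain ⟨hmem, -, hhigh⟩ := hc
  have hαα : 0 < ⟪α, α⟫ := real_inner_self_pos.2 (h.nonzero α hα)
  have htop : 0 ≤ ⟪β + (p : ℤ) • α, α⟫ :=
    h.inner_nonneg_of_add_notMem (hmem p (by omega) le_rfl) hα
      (by rwa [add_assoc, ← add_one_zsmul])
  rw [real_inner_add_zsmul_left, Int.cast_natCast] at htop
  have hgap : ∀ k : ℤ, (p : ℤ) + 1 ≤ k → β + k • α ∉ Φ ∪ {0} := by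
    intro k hk
    induction k, hk using Int.leInduction with
    | base => exact hhigh
    | succ k hk ih =>
      intro hk₁
      have hdown := h.inner_nonneg_of_add_notMem hk₁ (h.neg_mem hα)
        (by rwa [add_one_zsmul, ← add_assoc, add_neg_cancel_right])
      rw [inner_neg_right, real_inner_add_zsmul_left] at hdown
      have : (p : ℝ) + 1 ≤ k := by exact_mod_cast hk
      push_cast at hdown
      nlinarith
  by_contra! hlt
  exact hgap j (by omega) hj

theorem neg_le_of_isChainPair (h : IsRootSystem Φ) {β α : U} {q p : ℕ} (hα : α ∈ Φ)
    (hc : IsChainPair (Φ ∪ {0}) β α q p) {j : ℤ} (hj : β + j • α ∈ Φ ∪ {0}) :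
    -(q : ℤ) ≤ j := by
  have := h.le_of_isChainPair (h.neg_mem hα) hc.neg (j := -j) (by rwa [neg_smul_neg])
  omega

theorem add_neg_sub_zsmul_mem (h : IsRootSystem Φ) {β α : U} (hα : α ∈ Φ) {n : ℤ}
    (hn : 2 * ⟪β, α⟫ / ⟪α, α⟫ = n) {j : ℤ} (hj : β + j • α ∈ Φ ∪ {0}) :
    β + (-n - j) • α ∈ Φ ∪ {0} := by
  have hαα : ⟪α, α⟫ ≠ 0 := (real_inner_self_pos.2 (h.nonzero α hα)).ne'
  have hcoef : 2 * ⟪β + j • α, α⟫ / ⟪α, α⟫ = n + 2 * j := by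
    rw [real_inner_add_zsmul_left, ← hn]
    field_simp
  convert h.reflect_mem_union_zero hα hj using 1
  rw [hcoef, ← Int.cast_smul_eq_zsmul ℝ, ← Int.cast_smul_eq_zsmul ℝ]
  push_cast
  module

end IsRootSystem

theorem stmt6_general {U : Type*} [NormedAddCommGroup U] [InnerProductSpace ℝ U]
    (Φ : Set U) (h : IsRootSystem Φ)
    (β α : U) (hα : α ∈ Φ) (q p : ℕ)
    (hchain : IsChainPair (Φ ∪ {0}) β α q p) :
    2 * ⟪β, α⟫ / ⟪α, α⟫ = (q : ℝ) - (p : ℝ) := by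
  have hmem := hchain.1
  obtain ⟨n, hn⟩ := h.integral_of_mem_union_zero hα (by simpa using hmem 0 (by omega) (by omega))
  have hbot := h.neg_le_of_isChainPair hα hchain
    (h.add_neg_sub_zsmul_mem hα hn (hmem p (by omega) le_rfl))
  have htop := h.le_of_isChainPair hα hchain
    (h.add_neg_sub_zsmul_mem hα hn (hmem (-q) le_rfl (by omega)))
  rw [hn]
  exact_mod_cast (show n = q - p by omega)

/-- Every root system is a system of roots: the Killing integer `q - p` of the
extremal root chain through `β` in the direction `α` equals `2(β,α)/(α,α)`. -/
theorem stmt6 {U : Type*} [NormedAddCommGroup U] [InnerProductSpace ℝ U]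
    [FiniteDimensional ℝ U] (Φ : Set U) (h : IsRootSystem Φ)
    (β α : U) (hβ : β ∈ Φ) (hα : α ∈ Φ) (q p : ℕ)
    (hchain : IsChainPair (Φ ∪ {0}) β α q p) :
    2 * ⟪β, α⟫ / ⟪α, α⟫ = (q : ℝ) - (p : ℝ) :=
  stmt6_general Φ h β α hα q p hchain
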